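/- Let B be a real symmetric n×n matrix with spectral decomposition B = U diag(λ) Uᵀ where U is orthogonal. Then for τ > 0, the minimizer of Z ↦ τ‖Z‖_* + (1/2)‖Z - B‖_F² over symmetric matrices Z is Z = U diag(ẑ) Uᵀ, where ẑ_i is the soft-thresholding of λ_i at level τ. -/

import Mathlib

/-!
Conjugating by `U` reduces the problem to `B = diag λ`, since the Frobenius norm is orthogonally
invariant. For `W = Uᵀ Z U`, dropping the off-diagonal entries only lowers `‖W - diag λ‖_F²`, and
`∑ |Wᵢᵢ| ≤ ‖Z‖_*` because each `Wᵢᵢ` is an average of the eigenvalues of `Z` with weights given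
by the squared entries of an orthogonal matrix. What remains decouples into the scalar problems
`min_z τ|z| + ½(z - λᵢ)²`, solved by soft-thresholding.
-/

open Matrix Finset

noncomputable def softThreshold (τ x : ℝ) : ℝ :=
  Real.sign x * max (|x| - τ) 0

lemma softThreshold_of_abs_le {τ x : ℝ} (h : |x| ≤ τ) : softThreshold τ x = 0 := by
  simp [softThreshold, max_eq_right (sub_nonpos.mpr h)]

lemma abs_softThreshold_and_sq_sub_of_lt_abs {τ x : ℝ} (hτ : 0 ≤ τ) (h : τ < |x|) :
    |softThreshold τ x| = |x| - τ ∧ (softThreshold τ x - x) ^ 2 = τ ^ 2 := by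
  rw [softThreshold, max_eq_left (sub_nonneg.mpr h.le)]
  rcases lt_trichotomy x 0 with hx | rfl | hx
  · rw [Real.sign_of_neg hx, abs_of_neg hx] at *
    exact ⟨by rw [abs_of_nonpos] <;> linarith, by ring⟩
  · exact absurd h (by simpa using hτ)
  · rw [Real.sign_of_pos hx, abs_of_pos hx] at *
    exact ⟨by rw [abs_of_nonneg] <;> linarith, by ring⟩

theorem softThreshold_objective_le {τ : ℝ} (hτ : 0 ≤ τ) (x z : ℝ) :
    τ * |softThreshold τ x| + 1 / 2 * (softThreshold τ x - x) ^ 2 ≤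
      τ * |z| + 1 / 2 * (z - x) ^ 2 := by
  rcases le_or_gt |x| τ with hx | hx
  · rw [softThreshold_of_abs_le hx]
    have hzx : z * x ≤ τ * |z| :=
      calc z * x ≤ |z| * |x| := by rw [← abs_mul]; exact le_abs_self _
        _ ≤ τ * |z| := by rw [mul_comm]; gcongr
    nlinarith [sq_nonneg z]
  · obtain ⟨habs, hsq⟩ := abs_softThreshold_and_sq_sub_of_lt_abs hτ hx
    rw [habs, hsq]
    -- `τ|x| ≤ τ|z| + τ|z - x|` and AM-GM on `τ|z - x|`
    have htri : |x| ≤ |z| + |z - x| := by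
      linarith [abs_sub_abs_le_abs_sub x z, abs_sub_comm x z]
    nlinarith [mul_le_mul_of_nonneg_left htri hτ, sq_nonneg (|z - x| - τ), sq_abs (z - x)]

section Frobenius

variable {m n : Type*} [Fintype m] [Fintype n]

def frobeniusSq (A : Matrix m n ℝ) : ℝ :=
  ∑ i, ∑ j, A i j ^ 2

lemma frobeniusSq_eq_trace (A : Matrix m n ℝ) : frobeniusSq A = trace (Aᵀ * A) := by
  rw [frobeniusSq, sum_comm]
  simp [trace, mul_apply, sq]

lemma sum_sq_diag_le_frobeniusSq (M : Matrix n n ℝ) : ∑ i, M i i ^ 2 ≤ frobeniusSq M :=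
  sum_le_sum fun i _ => single_le_sum (fun j _ => sq_nonneg (M i j)) (mem_univ i)

variable [DecidableEq n]

lemma frobeniusSq_conj {U : Matrix n n ℝ} (hU : U * Uᵀ = 1) (M : Matrix n n ℝ) :
    frobeniusSq (U * M * Uᵀ) = frobeniusSq M := by
  have hU' : Uᵀ * U = 1 := mul_eq_one_comm.mp hU
  rw [frobeniusSq_eq_trace, frobeniusSq_eq_trace, transpose_mul, transpose_mul,
    transpose_transpose]
  calc trace (U * (Mᵀ * Uᵀ) * (U * M * Uᵀ)) = trace (U * (Mᵀ * (Uᵀ * U) * M) * Uᵀ) := by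
        simp only [Matrix.mul_assoc]
    _ = trace (Mᵀ * M) := by
        rw [hU', Matrix.mul_one, trace_mul_cycle, ← Matrix.mul_assoc, hU', Matrix.one_mul]

lemma frobeniusSq_diagonal (d : n → ℝ) : frobeniusSq (diagonal d) = ∑ i, d i ^ 2 := by
  refine sum_congr rfl fun i _ => ?_
  rw [sum_eq_single i (fun j _ hj => by simp [diagonal_apply_ne d (Ne.symm hj)]) (by simp)]
  simp

lemma sum_sq_diag_sub_le_frobeniusSq (A : Matrix n n ℝ) (d : n → ℝ) :
    ∑ i, (A i i - d i) ^ 2 ≤ frobeniusSq (A - diagonal d) := by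
  simpa using sum_sq_diag_le_frobeniusSq (A - diagonal d)

end Frobenius

section NuclearNorm

variable {n : Type*} [Fintype n] [DecidableEq n]

lemma sum_abs_diag_conj_diagonal_le {C : Matrix n n ℝ} (hC : C * Cᵀ = 1) (μ : n → ℝ) :
    ∑ i, |(Cᵀ * diagonal μ * C) i i| ≤ ∑ k, |μ k| := by
  have hentry : ∀ i, (Cᵀ * diagonal μ * C) i i = ∑ k, μ k * C k i ^ 2 := fun i => by
    simp only [mul_apply, transpose_apply, diagonal_apply, mul_ite, mul_zero, sum_ite_eq',
      mem_univ, if_true]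
    exact sum_congr rfl fun k _ => by ring
  have hrow : ∀ k, ∑ i, C k i ^ 2 = 1 := fun k => by
    simpa [mul_apply, sq] using congrFun (congrFun hC k) k
  calc ∑ i, |(Cᵀ * diagonal μ * C) i i|
      ≤ ∑ i, ∑ k, |μ k| * C k i ^ 2 := by
        refine sum_le_sum fun i _ => ?_
        rw [hentry]
        refine (abs_sum_le_sum_abs _ _).trans_eq (sum_congr rfl fun k _ => ?_)
        rw [abs_mul, abs_of_nonneg (sq_nonneg (C k i))]
    _ = ∑ k, |μ k| * ∑ i, C k i ^ 2 := by
        rw [sum_comm]; simp only [mul_sum]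
    _ = ∑ k, |μ k| := by simp [hrow]

lemma Matrix.IsHermitian.exists_orthogonal_eq_conj_diagonal {Z : Matrix n n ℝ}
    (hZ : Z.IsHermitian) : ∃ V : Matrix n n ℝ, V * Vᵀ = 1 ∧ Z = V * diagonal hZ.eigenvalues * Vᵀ := by
  refine ⟨hZ.eigenvectorUnitary, ?_, ?_⟩
  · simpa [star_eq_conjTranspose] using (mem_unitaryGroup_iff.mp hZ.eigenvectorUnitary.2)
  · simpa [star_eq_conjTranspose, Function.comp_def] using hZ.spectral_theorem

lemma sum_abs_diag_conj_le_sum_abs_eigenvalues {Z U : Matrix n n ℝ} (hZ : Z.IsHermitian)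
    (hU : U * Uᵀ = 1) : ∑ i, |(Uᵀ * Z * U) i i| ≤ ∑ i, |hZ.eigenvalues i| := by
  obtain ⟨V, hV, hZV⟩ := hZ.exists_orthogonal_eq_conj_diagonal
  have hC : (Vᵀ * U) * (Vᵀ * U)ᵀ = 1 := by
    rw [transpose_mul, transpose_transpose, Matrix.mul_assoc, ← Matrix.mul_assoc U, hU,
      Matrix.one_mul, mul_eq_one_comm.mp hV]
  have hconj : Uᵀ * Z * U = (Vᵀ * U)ᵀ * diagonal hZ.eigenvalues * (Vᵀ * U) := by
    rw [transpose_mul, transpose_transpose]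
    conv_lhs => rw [hZV]
    simp only [Matrix.mul_assoc]
  rw [hconj]
  exact sum_abs_diag_conj_diagonal_le hC _

end NuclearNorm

/-- For a real symmetric matrix `B = U diag(λ) Uᵀ` with `U` orthogonal and `τ > 0`,
the matrix `U diag(ẑ) Uᵀ`, where `ẑᵢ = sign(λᵢ)·max(|λᵢ| - τ, 0)` is the
soft-thresholding of `λᵢ`, minimizes `Z ↦ τ‖Z‖_* + (1/2)‖Z - B‖_F²` over symmetric
matrices (nuclear norm = sum of absolute values of eigenvalues). -/
theorem stmt_4 {n : Type*} [Fintype n] [DecidableEq n]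
    (B U : Matrix n n ℝ) (lam : n → ℝ)
    (hU : U * Uᵀ = 1) (hB : B = U * Matrix.diagonal lam * Uᵀ)
    (τ : ℝ) (hτ : 0 < τ)
    (zhat : n → ℝ) (hz : ∀ i, zhat i = Real.sign (lam i) * max (|lam i| - τ) 0) :
    ∀ (Z : Matrix n n ℝ) (hZ : Z.IsHermitian),
      τ * (∑ i, |zhat i|) +
        (1 / 2) * ∑ i, ∑ j, ((U * Matrix.diagonal zhat * Uᵀ) i j - B i j) ^ 2 ≤
      τ * (∑ i, |hZ.eigenvalues i|) +
        (1 / 2) * ∑ i, ∑ j, (Z i j - B i j) ^ 2 := by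
  intro Z hZ
  obtain rfl : zhat = fun i => softThreshold τ (lam i) := funext hz
  set W := Uᵀ * Z * U
  have hZW : Z = U * W * Uᵀ := by
    simp only [W, ← Matrix.mul_assoc, hU, Matrix.one_mul]
    rw [Matrix.mul_assoc, hU, Matrix.mul_one]
  have hLHS : frobeniusSq (U * diagonal (fun i => softThreshold τ (lam i)) * Uᵀ - B) =
      ∑ i, (softThreshold τ (lam i) - lam i) ^ 2 := by
    rw [hB, ← Matrix.sub_mul, ← Matrix.mul_sub, diagonal_sub, frobeniusSq_conj hU,
      frobeniusSq_diagonal]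
  have hRHS : frobeniusSq (Z - B) = frobeniusSq (W - diagonal lam) := by
    rw [hZW, hB, ← Matrix.sub_mul, ← Matrix.mul_sub, frobeniusSq_conj hU]
  change _ + 1 / 2 * frobeniusSq (U * diagonal (fun i => softThreshold τ (lam i)) * Uᵀ - B) ≤
    _ + 1 / 2 * frobeniusSq (Z - B)
  rw [hLHS, hRHS, mul_sum, mul_sum, ← sum_add_distrib]
  calc ∑ i, (τ * |softThreshold τ (lam i)| + 1 / 2 * (softThreshold τ (lam i) - lam i) ^ 2)
      ≤ ∑ i, (τ * |W i i| + 1 / 2 * (W i i - lam i) ^ 2) :=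
        sum_le_sum fun i _ => softThreshold_objective_le hτ.le _ _
    _ = τ * ∑ i, |W i i| + 1 / 2 * ∑ i, (W i i - lam i) ^ 2 := by
        rw [sum_add_distrib, mul_sum, mul_sum]
    _ ≤ τ * ∑ i, |hZ.eigenvalues i| + 1 / 2 * frobeniusSq (W - diagonal lam) := by
        gcongr τ * ?_ + 1 / 2 * ?_
        · exact sum_abs_diag_conj_le_sum_abs_eigenvalues hZ hU
        · exact sum_sq_diag_sub_le_frobeniusSq W lam
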